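/- arXiv:2212.12419 — 3 statements merged into one kernel-verified Lean document; each statement's English description precedes it below -/
import Mathlib

section
/- For a random variable X with continuous strictly increasing distribution function F and finite mean, and for α ∈ (0,1), the expected shortfall satisfies (1-α)^{-1} ∫_α^1 F^{-1}(t) dt = (1-α)^{-1} min_{ξ∈ℝ} E[ρ_α(X-ξ)] + E[X], where ρ_α(x) = x(α - 1{x<0}). -/
/-!
Write `ρ_α(x) = x⁺ - (1 - α) x`, so that `E ρ_α(X - ξ) = E (X - ξ)⁺ - (1 - α)(E X - ξ)`. For
`q = F⁻¹(α)` the pointwise bound `(X - ξ)⁺ ≥ (X - q)⁺ + (q - ξ) 1{X > q}` together with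
`P(X > q) = 1 - α` shows that `ξ = q` minimises. On the other side, `F⁻¹` under Lebesgue measure on
`(0, 1)` has the law of `X`, so `E (X - q)⁺ = ∫₀¹ (F⁻¹(t) - q)⁺ dt = ∫_α^1 (F⁻¹(t) - q) dt`,
and both sides equal `(1 - α)⁻¹ E (X - q)⁺ + q`.
-/

open MeasureTheory Set ProbabilityTheory

lemma check_eq_max_sub (α x : ℝ) :
    x * (α - if x < 0 then 1 else 0) = max x 0 - (1 - α) * x := by
  rcases lt_or_ge x 0 with hx | hx
  · rw [if_pos hx, max_eq_right hx.le]; ring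
  · rw [if_neg hx.not_gt, max_eq_left hx]; ring

section CheckLoss

variable {Ω : Type*} [MeasurableSpace Ω] {μ : Measure Ω} {X : Ω → ℝ}

lemma integral_check_sub [IsProbabilityMeasure μ] (hX : Integrable X μ) (α ξ : ℝ) :
    ∫ ω, (X ω - ξ) * (α - if X ω - ξ < 0 then 1 else 0) ∂μ
      = ∫ ω, max (X ω - ξ) 0 ∂μ - (1 - α) * (∫ ω, X ω ∂μ - ξ) := by
  have hXξ : Integrable (fun ω => X ω - ξ) μ := hX.sub (integrable_const ξ)
  simp_rw [check_eq_max_sub]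
  rw [integral_sub hXξ.pos_part (hXξ.const_mul _), integral_const_mul,
    integral_sub hX (integrable_const ξ), integral_const, probReal_univ, one_smul]

lemma le_integral_posPart_sub [IsFiniteMeasure μ] (hXm : Measurable X) (hX : Integrable X μ)
    (q ξ : ℝ) :
    ∫ ω, max (X ω - q) 0 ∂μ + (q - ξ) * μ.real {ω | q < X ω} ≤ ∫ ω, max (X ω - ξ) 0 ∂μ := by
  have hmeas : MeasurableSet {ω | q < X ω} := measurableSet_lt measurable_const hXm
  have hind : Integrable ({ω | q < X ω}.indicator fun _ => q - ξ) μ :=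
    (integrable_const _).indicator hmeas
  have hposPart (c : ℝ) : Integrable (fun ω => max (X ω - c) 0) μ :=
    (hX.sub (integrable_const c)).pos_part
  rw [mul_comm, ← smul_eq_mul, ← integral_indicator_const _ hmeas,
    ← integral_add (hposPart q) hind]
  refine integral_mono ((hposPart q).add hind) (hposPart ξ) fun ω => ?_
  by_cases hω : q < X ω
  · simp only [indicator_of_mem (show ω ∈ {ω | q < X ω} from hω),
      max_eq_left (sub_nonneg.2 hω.le)]
    linarith [le_max_left (X ω - ξ) 0]
  · simp only [indicator_of_notMem (show ω ∉ {ω | q < X ω} from hω),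
      max_eq_right (sub_nonpos.2 (not_lt.1 hω))]
    linarith [le_max_right (X ω - ξ) 0]

lemma iInf_integral_check_sub [IsProbabilityMeasure μ] (hXm : Measurable X) (hX : Integrable X μ)
    {α q : ℝ} (hq : μ.real {ω | q < X ω} = 1 - α) :
    ⨅ ξ : ℝ, ∫ ω, (X ω - ξ) * (α - if X ω - ξ < 0 then 1 else 0) ∂μ
      = ∫ ω, max (X ω - q) 0 ∂μ - (1 - α) * (∫ ω, X ω ∂μ - q) := by
  have hmin : ∀ ξ, ∫ ω, (X ω - q) * (α - if X ω - q < 0 then 1 else 0) ∂μ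
      ≤ ∫ ω, (X ω - ξ) * (α - if X ω - ξ < 0 then 1 else 0) ∂μ := fun ξ => by
    rw [integral_check_sub hX, integral_check_sub hX]
    linarith [hq ▸ le_integral_posPart_sub hXm hX q ξ]
  rw [← integral_check_sub hX α q]
  exact le_antisymm (ciInf_le ⟨_, forall_mem_range.2 hmin⟩ q) (le_ciInf hmin)

end CheckLoss

section Quantile

variable {F Finv : ℝ → ℝ}

lemma quantile_le_iff (hFm : StrictMono F) {t : ℝ} (ht : F (Finv t) = t) (x : ℝ) :
    Finv t ≤ x ↔ t ≤ F x := by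
  rw [← hFm.le_iff_le, ht]

lemma lt_quantile_iff (hFm : StrictMono F) {t : ℝ} (ht : F (Finv t) = t) (x : ℝ) :
    x < Finv t ↔ F x < t := by
  rw [← hFm.lt_iff_lt, ht]

lemma strictMonoOn_quantile (hFm : StrictMono F) {s : Set ℝ} (hInv : ∀ t ∈ s, F (Finv t) = t) :
    StrictMonoOn Finv s := fun a ha b hb hab => by
  rwa [← hFm.lt_iff_lt, hInv a ha, hInv b hb]

lemma aemeasurable_quantile (hFm : StrictMono F) (hInv : ∀ t ∈ Ioo (0 : ℝ) 1, F (Finv t) = t) :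
    AEMeasurable Finv (volume.restrict (Ioo 0 1)) :=
  aemeasurable_restrict_of_monotoneOn measurableSet_Ioo (strictMonoOn_quantile hFm hInv).monotoneOn

variable {Ω : Type*} [MeasurableSpace Ω] {μ : Measure Ω} [IsProbabilityMeasure μ] {X : Ω → ℝ}

lemma identDistrib_quantile (hXm : Measurable X) (hF : ∀ x, F x = μ.real {ω | X ω ≤ x})
    (hFm : StrictMono F) (hInv : ∀ t ∈ Ioo (0 : ℝ) 1, F (Finv t) = t) :
    IdentDistrib Finv X (volume.restrict (Ioo 0 1)) μ where
  aemeasurable_fst := aemeasurable_quantile hFm hInv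
  aemeasurable_snd := hXm.aemeasurable
  map_eq := by
    refine (Measure.ext_of_Iic _ _ fun x => ?_).symm
    have hFx : F x < 1 := (hFm (lt_add_one x)).trans_le (hF _ ▸ measureReal_le_one)
    have hlevel : Finv ⁻¹' Iic x ∩ Ioo 0 1 = Ioc 0 (F x) := by
      ext t
      simp only [mem_inter_iff, mem_preimage, mem_Iic, mem_Ioo, mem_Ioc]
      constructor
      · rintro ⟨hle, ht0, ht1⟩
        exact ⟨ht0, (quantile_le_iff hFm (hInv t ⟨ht0, ht1⟩) x).1 hle⟩
      · rintro ⟨ht0, htx⟩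
        exact ⟨(quantile_le_iff hFm (hInv t ⟨ht0, htx.trans_lt hFx⟩) x).2 htx, ht0,
          htx.trans_lt hFx⟩
    rw [Measure.map_apply hXm measurableSet_Iic,
      Measure.map_apply_of_aemeasurable (aemeasurable_quantile hFm hInv) measurableSet_Iic,
      Measure.restrict_apply' measurableSet_Ioo, hlevel, Real.volume_Ioc, sub_zero, hF,
      ← ofReal_measureReal]
    rfl

lemma intervalIntegral_quantile (hXm : Measurable X) (hX : Integrable X μ)
    (hF : ∀ x, F x = μ.real {ω | X ω ≤ x}) (hFm : StrictMono F)
    (hInv : ∀ t ∈ Ioo (0 : ℝ) 1, F (Finv t) = t) {α : ℝ} (hα : α ∈ Ioo (0 : ℝ) 1) :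
    ∫ t in α..1, Finv t = ∫ ω, max (X ω - Finv α) 0 ∂μ + (1 - α) * Finv α := by
  have hd := identDistrib_quantile hXm hF hFm hInv
  have hsub : Ioo α 1 ⊆ Ioo 0 1 := Ioo_subset_Ioo_left hα.1.le
  have hFα : F (Finv α) = α := hInv α hα
  have hint : IntegrableOn Finv (Ioo 0 1) := hd.symm.integrable_snd hX
  have hlaw : ∫ t in Ioo 0 1, max (Finv t - Finv α) 0 = ∫ ω, max (X ω - Finv α) 0 ∂μ :=
    (hd.comp ((measurable_id.sub_const (Finv α)).max measurable_const)).integral_eq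
  have hposPart : ∫ ω, max (X ω - Finv α) 0 ∂μ = ∫ t in Ioo α 1, (Finv t - Finv α) := by
    rw [← hlaw, setIntegral_eq_of_subset_of_forall_sdiff_eq_zero measurableSet_Ioo hsub]
    · refine setIntegral_congr_fun measurableSet_Ioo fun t ht => max_eq_left (sub_nonneg.2 ?_)
      exact ((lt_quantile_iff hFm (hInv t (hsub ht)) _).2 (hFα.symm ▸ ht.1)).le
    · rintro t ⟨ht, htα⟩
      have hle : t ≤ α := by by_contra! h; exact htα ⟨h, ht.2⟩
      exact max_eq_right (sub_nonpos.2 ((quantile_le_iff hFm (hInv t ht) _).2 (hFα.symm ▸ hle)))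
  rw [intervalIntegral.integral_of_le hα.2.le, integral_Ioc_eq_integral_Ioo, hposPart,
    integral_sub (hint.mono_set hsub) (integrableOn_const measure_Ioo_lt_top.ne), setIntegral_const,
    Real.volume_real_Ioo_of_le hα.2.le, smul_eq_mul]
  ring

end Quantile

theorem stmt_0_general {Ω : Type*} [MeasurableSpace Ω] (μ : Measure Ω) [IsProbabilityMeasure μ]
    (X : Ω → ℝ) (hX : Measurable X) (hXint : Integrable X μ)
    (α : ℝ) (hα : α ∈ Set.Ioo (0:ℝ) 1)
    (F Finv : ℝ → ℝ)
    (hF : ∀ x, F x = (μ {ω | X ω ≤ x}).toReal)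
    (hFm : StrictMono F)
    (hInv : ∀ t ∈ Set.Ioo (0:ℝ) 1, F (Finv t) = t) :
    (1 - α)⁻¹ * ∫ t in α..1, Finv t
      = (1 - α)⁻¹ * (⨅ ξ : ℝ, ∫ ω, (X ω - ξ) * (α - if X ω - ξ < 0 then 1 else 0) ∂μ)
        + ∫ ω, X ω ∂μ := by
  have htail : μ.real {ω | Finv α < X ω} = 1 - α := calc
    _ = 1 - F (Finv α) := by
      rw [hF, ← measureReal_def, ← probReal_compl_eq_one_sub (measurableSet_le hX measurable_const)]
      simp only [compl_ofPred, not_le]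
    _ = 1 - α := by rw [hInv α hα]
  have h1α : 1 - α ≠ 0 := (sub_pos.2 hα.2).ne'
  rw [intervalIntegral_quantile hX hXint hF hFm hInv hα, iInf_integral_check_sub hX hXint htail]
  field_simp
  ring

/-- Expected shortfall equals the Koenker–Bassett minimization formula. -/
theorem stmt_0 {Ω : Type*} [MeasurableSpace Ω] (μ : Measure Ω) [IsProbabilityMeasure μ]
    (X : Ω → ℝ) (hX : Measurable X) (hXint : Integrable X μ)
    (α : ℝ) (hα : α ∈ Set.Ioo (0:ℝ) 1)
    (F Finv : ℝ → ℝ)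
    (hF : ∀ x, F x = (μ {ω | X ω ≤ x}).toReal)
    (hFc : Continuous F) (hFm : StrictMono F)
    (hInv : ∀ t ∈ Set.Ioo (0:ℝ) 1, F (Finv t) = t) :
    (1 - α)⁻¹ * ∫ t in α..1, Finv t
      = (1 - α)⁻¹ * (⨅ ξ : ℝ, ∫ ω, (X ω - ξ) * (α - if X ω - ξ < 0 then 1 else 0) ∂μ)
        + ∫ ω, X ω ∂μ :=
  stmt_0_general μ X hX hXint α hα F Finv hF hFm hInv
end

section
/- Let X and V be independent random variables where V is symmetric with E[V]=0, E[V^2]=1, E[V^4]<∞, and X has distribution function F with density f having bounded continuous derivatives up to order 4. Then for z ∈ ℝ, P(X + √δ V ≤ z) = F(z) + (δ/2) f'(z) + (δ²/24) f'''(z) E[V^4] + o(δ²) as δ ↓ 0. -/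
open MeasureTheory Set Asymptotics Filter


lemma my_iDW_eq {f : ℝ → ℝ} {N : ℕ} (hf : ContDiff ℝ N f) {s : Set ℝ} (hs : UniqueDiffOn ℝ s)
    {k : ℕ} (hk : k ≤ N) {x : ℝ} (hx : x ∈ s) :
    iteratedDerivWithin k f s x = iteratedDeriv k f x := by
  have h := (contDiff_iff_ftaylorSeries.mp (hf.of_le (le_refl _))).hasFTaylorSeriesUpToOn s
  have h2 := h.eq_iteratedFDerivWithin_of_uniqueDiffOn (m := k) (by exact_mod_cast hk) hs hx
  rw [iteratedDerivWithin_eq_iteratedFDerivWithin, iteratedDeriv_eq_iteratedFDeriv, ← h2]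
  rfl

lemma my_taylor_nonneg {g : ℝ → ℝ} {n : ℕ} (hg : ContDiff ℝ (n+1 : ℕ) g) {C : ℝ}
    (hC : ∀ x, |iteratedDeriv (n+1) g x| ≤ C) (z : ℝ) {h : ℝ} (hh : 0 ≤ h) :
    |g (z + h) - ∑ k ∈ Finset.range (n+1), ((k.factorial : ℝ))⁻¹ * h^k * iteratedDeriv k g z|
      ≤ C * |h|^(n+1) / n.factorial := by
  have hC0 : 0 ≤ C := le_trans (abs_nonneg _) (hC z)
  rcases eq_or_lt_of_le hh with rfl | hpos
  · have hs : (∑ k ∈ Finset.range (n+1), ((k.factorial : ℝ))⁻¹ * (0:ℝ)^k * iteratedDeriv k g z)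
        = g z := by
      rw [Finset.sum_range_succ']
      simp
    rw [hs]
    simp
  · have hab : z ≤ z + h := by linarith
    have hu : UniqueDiffOn ℝ (Icc z (z+h)) := uniqueDiffOn_Icc (by linarith)
    have hbd := taylor_mean_remainder_bound (f := g) (a := z) (b := z+h) (n := n) hab
      (hg.contDiffOn) (right_mem_Icc.mpr hab)
      (fun y hy => by
        rw [Real.norm_eq_abs, my_iDW_eq hg hu (le_refl _) hy]; exact hC y)
    rw [taylor_within_apply] at hbd
    have hsum : ∀ k ∈ Finset.range (n+1),
        (((k.factorial : ℝ))⁻¹ * (z + h - z) ^ k) • iteratedDerivWithin k g (Icc z (z+h)) z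
          = ((k.factorial : ℝ))⁻¹ * h^k * iteratedDeriv k g z := by
      intro k hk
      rw [Finset.mem_range] at hk
      rw [my_iDW_eq hg hu (by omega) (left_mem_Icc.mpr hab), smul_eq_mul,
        add_sub_cancel_left]
    rw [Finset.sum_congr rfl hsum] at hbd
    rw [abs_of_nonneg hh]
    calc |g (z + h) - ∑ k ∈ Finset.range (n+1), ((k.factorial : ℝ))⁻¹ * h^k * iteratedDeriv k g z|
        ≤ C * (z + h - z) ^ (n + 1) / n.factorial := hbd
      _ = C * h ^ (n+1) / n.factorial := by ring_nf


lemma my_taylor {g : ℝ → ℝ} {n : ℕ} (hg : ContDiff ℝ (n+1 : ℕ) g) {C : ℝ}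
    (hC : ∀ x, |iteratedDeriv (n+1) g x| ≤ C) (z h : ℝ) :
    |g (z + h) - ∑ k ∈ Finset.range (n+1), ((k.factorial : ℝ))⁻¹ * h^k * iteratedDeriv k g z|
      ≤ C * |h|^(n+1) / n.factorial := by
  rcases le_or_gt 0 h with hh | hh
  · exact my_taylor_nonneg hg hC z hh
  · set m : ℝ → ℝ := fun t => g (-t) with hm
    have hmd : ContDiff ℝ (n+1 : ℕ) m := hg.comp contDiff_neg
    have hiter : ∀ (k : ℕ) (y : ℝ), iteratedDeriv k m y = (-1:ℝ)^k * iteratedDeriv k g (-y) := by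
      intro k y
      have := iteratedDeriv_comp_neg (𝕜 := ℝ) (F := ℝ) k g y
      simpa [hm, smul_eq_mul] using this
    have hCm : ∀ x, |iteratedDeriv (n+1) m x| ≤ C := by
      intro x
      rw [hiter, abs_mul, abs_pow, abs_neg, abs_one, one_pow, one_mul]
      exact hC _
    have key := my_taylor_nonneg (n := n) hmd hCm (-z) (h := -h) (by linarith)
    have e1 : m (-z + -h) = g (z + h) := by simp [hm]; ring_nf
    have e2 : ∀ k ∈ Finset.range (n+1),
        ((k.factorial : ℝ))⁻¹ * (-h)^k * iteratedDeriv k m (-z)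
          = ((k.factorial : ℝ))⁻¹ * h^k * iteratedDeriv k g z := by
      intro k _
      rw [hiter, neg_neg, neg_pow h k]
      ring_nf
      rw [mul_comm k 2, pow_mul]
      norm_num
    rw [e1, Finset.sum_congr rfl e2, abs_neg] at key
    exact key


lemma my_taylor4 {g : ℝ → ℝ} (hg : ContDiff ℝ (5:ℕ) g) {C : ℝ}
    (hC : ∀ x, |iteratedDeriv 5 g x| ≤ C) (z h : ℝ) :
    |g (z + h) - (g z + h * iteratedDeriv 1 g z + h^2/2 * iteratedDeriv 2 g z
      + h^3/6 * iteratedDeriv 3 g z + h^4/24 * iteratedDeriv 4 g z)|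
      ≤ C * |h|^5 / 24 := by
  have := my_taylor (n := 4) (by exact_mod_cast hg) hC z h
  simp [Finset.sum_range_succ, Nat.factorial] at this
  convert this using 2 <;> norm_num <;> ring

lemma my_taylor3 {g : ℝ → ℝ} (hg : ContDiff ℝ (4:ℕ) g) {C : ℝ}
    (hC : ∀ x, |iteratedDeriv 4 g x| ≤ C) (z h : ℝ) :
    |g (z + h) - (g z + h * iteratedDeriv 1 g z + h^2/2 * iteratedDeriv 2 g z
      + h^3/6 * iteratedDeriv 3 g z)|
      ≤ C * |h|^4 / 6 := by
  have := my_taylor (n := 3) (by exact_mod_cast hg) hC z h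
  simp [Finset.sum_range_succ, Nat.factorial] at this
  convert this using 2 <;> norm_num <;> ring

lemma my_rep {Ω : Type*} [MeasurableSpace Ω] (μ : Measure Ω) [IsProbabilityMeasure μ]
    (X V : Ω → ℝ) (hX : Measurable X) (hV : Measurable V)
    (hindep : ProbabilityTheory.IndepFun X V μ) (c z : ℝ) :
    (μ {ω | X ω + c * V ω ≤ z}).toReal
      = ∫ ω, (μ {ω' | X ω' ≤ z - c * V ω}).toReal ∂μ := by
  set G : ℝ → ℝ := fun x => (μ {ω | X ω ≤ x}).toReal with hGdef
  have hGmono : Monotone G := fun a b hab => ENNReal.toReal_mono (measure_ne_top μ _)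
    (measure_mono (fun ω h => le_trans h hab))
  have hGmeas : Measurable G := hGmono.measurable
  have hmap : μ.map (fun ω => (V ω, X ω)) = (μ.map V).prod (μ.map X) :=
    (ProbabilityTheory.indepFun_iff_map_prod_eq_prod_map_map hV.aemeasurable
      hX.aemeasurable).mp hindep.symm
  have hset : MeasurableSet {p : ℝ × ℝ | p.2 + c * p.1 ≤ z} :=
    measurableSet_le (measurable_snd.add (measurable_fst.const_mul c)) measurable_const
  have h1 : μ {ω | X ω + c * V ω ≤ z}
      = ((μ.map V).prod (μ.map X)) {p : ℝ × ℝ | p.2 + c * p.1 ≤ z} := by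
    rw [← hmap, Measure.map_apply (hV.prodMk hX) hset]
    rfl
  have h2 : ((μ.map V).prod (μ.map X)) {p : ℝ × ℝ | p.2 + c * p.1 ≤ z}
      = ∫⁻ v, ENNReal.ofReal (G (z - c * v)) ∂(μ.map V) := by
    rw [Measure.prod_apply hset]
    congr 1
    funext v
    have hpre : (Prod.mk v ⁻¹' {p : ℝ × ℝ | p.2 + c * p.1 ≤ z}) = Iic (z - c * v) := by
      ext x; simp only [mem_preimage, mem_setOf_eq, mem_Iic]; constructor <;> intro <;> linarith
    rw [hpre, Measure.map_apply hX measurableSet_Iic]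
    have : X ⁻¹' Iic (z - c * v) = {ω | X ω ≤ z - c * v} := rfl
    rw [this, hGdef]
    exact (ENNReal.ofReal_toReal (measure_ne_top μ _)).symm
  have h3 : (∫⁻ v, ENNReal.ofReal (G (z - c * v)) ∂(μ.map V)).toReal
      = ∫ v, G (z - c * v) ∂(μ.map V) := by
    have hm : Measurable fun v : ℝ => ENNReal.ofReal (G (z - c * v)) :=
      Measurable.ennreal_ofReal (hGmeas.comp (measurable_const.sub (measurable_id.const_mul c)))
    rw [← integral_toReal hm.aemeasurable
      (Filter.Eventually.of_forall (fun v => ENNReal.ofReal_lt_top))]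
    congr 1
    funext v
    rw [ENNReal.toReal_ofReal ENNReal.toReal_nonneg]
  have h4 : ∫ v, G (z - c * v) ∂(μ.map V) = ∫ ω, G (z - c * V ω) ∂μ :=
    integral_map hV.aemeasurable
      ((hGmeas.comp (measurable_const.sub (measurable_id.const_mul c))).aestronglyMeasurable)
  rw [h1, h2, h3, h4]

lemma my_intOn {Ω : Type*} [MeasurableSpace Ω] (μ : Measure Ω) [IsProbabilityMeasure μ]
    (X : Ω → ℝ) (f : ℝ → ℝ)
    (hF : ∀ x, (μ {ω | X ω ≤ x}).toReal = ∫ t in Set.Iic x, f t) (x : ℝ) :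
    IntegrableOn f (Iic x) := by
  by_contra hcon
  have hall : ∀ n : ℕ, μ {ω | X ω ≤ x + n} = 0 := by
    intro n
    have hni : ¬ IntegrableOn f (Iic (x + n)) := fun h =>
      hcon (h.mono_set (Iic_subset_Iic.mpr (by linarith [Nat.cast_nonneg (α := ℝ) n])))
    have h0 : (μ {ω | X ω ≤ x + n}).toReal = 0 := by rw [hF]; exact integral_undef hni
    exact ((ENNReal.toReal_eq_zero_iff _).mp h0).resolve_right (measure_ne_top μ _)
  have huniv : (Set.univ : Set Ω) ⊆ ⋃ n : ℕ, {ω | X ω ≤ x + n} := by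
    intro ω _
    obtain ⟨n, hn⟩ := exists_nat_ge (X ω - x)
    exact mem_iUnion.mpr ⟨n, by simp only [mem_setOf_eq]; linarith⟩
  have h0 : μ Set.univ = 0 := measure_mono_null huniv (measure_iUnion_null hall)
  simp [measure_univ] at h0

lemma my_G_hasDeriv (f : ℝ → ℝ) (hc : Continuous f)
    (hint : ∀ x, IntegrableOn f (Iic x) volume) (x : ℝ) :
    HasDerivAt (fun y => ∫ t in Iic y, f t) (f x) x := by
  have key : ∀ y, ∫ t in Iic y, f t = (∫ t in Iic (0:ℝ), f t) + ∫ t in (0:ℝ)..y, f t := by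
    intro y
    rw [← intervalIntegral.integral_Iic_sub_Iic (hint 0) (hint y)]; ring
  have hd : HasDerivAt (fun y => ∫ t in (0:ℝ)..y, f t) (f x) x :=
    intervalIntegral.integral_hasDerivAt_right (hc.intervalIntegrable 0 x)
      (hc.stronglyMeasurableAtFilter volume (nhds x)) hc.continuousAt
  have h2 := hd.const_add (∫ t in Iic (0:ℝ), f t)
  rw [show (fun y => ∫ t in Iic y, f t)
    = fun y => (∫ t in Iic (0:ℝ), f t) + ∫ t in (0:ℝ)..y, f t from funext key]
  exact h2

lemma my_G_contDiff (f : ℝ → ℝ) (hf : ContDiff ℝ (4:ℕ) f)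
    (hint : ∀ x, IntegrableOn f (Iic x) volume) :
    ContDiff ℝ (5:ℕ) (fun y => ∫ t in Iic y, f t)
      ∧ deriv (fun y => ∫ t in Iic y, f t) = f := by
  have hder : deriv (fun y => ∫ t in Iic y, f t) = f :=
    funext fun x => (my_G_hasDeriv f hf.continuous hint x).deriv
  constructor
  · rw [show ((5:ℕ) : WithTop ℕ∞) = (4:ℕ) + 1 by norm_num, contDiff_succ_iff_deriv]
    refine ⟨fun x => (my_G_hasDeriv f hf.continuous hint x).differentiableAt, ?_, ?_⟩
    · intro h; exact absurd h (by simp)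
    · rw [hder]; exact hf
  · exact hder

lemma my_key {Ω : Type*} [MeasurableSpace Ω] (μ : Measure Ω) [IsProbabilityMeasure μ]
    (V : Ω → ℝ)
    (h1 : Integrable V μ) (h2 : Integrable (fun ω => (V ω)^2) μ)
    (h3 : Integrable (fun ω => (V ω)^3) μ) (h4 : Integrable (fun ω => (V ω)^4) μ)
    (hV1 : ∫ ω, V ω ∂μ = 0) (hV3 : ∫ ω, (V ω)^3 ∂μ = 0)
    (G : ℝ → ℝ) (z s d1 d2 d3 d4 : ℝ) (R : Ω → ℝ)
    (hR : ∀ ω, R ω = G (z - s * V ω) - (G z + (-(s * V ω)) * d1 + (s * V ω)^2/2 * d2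
      + (-(s * V ω))^3/6 * d3 + (s * V ω)^4/24 * d4))
    (hRint : Integrable R μ) :
    ∫ ω, G (z - s * V ω) ∂μ
      = G z + s^2/2 * d2 * (∫ ω, (V ω)^2 ∂μ) + s^4/24 * d4 * (∫ ω, (V ω)^4 ∂μ)
        + ∫ ω, R ω ∂μ := by
  have e : ∀ ω, G (z - s * V ω) = R ω + (G z + (-s*d1) * V ω + (s^2/2*d2) * (V ω)^2
      + (-(s^3)/6*d3) * (V ω)^3 + (s^4/24*d4) * (V ω)^4) := by
    intro ω; rw [hR]; ring
  rw [integral_congr_ae (Filter.Eventually.of_forall e)]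
  have i0 : Integrable (fun _ : Ω => G z) μ := integrable_const _
  have i1 := h1.const_mul (-s*d1)
  have i2 := h2.const_mul (s^2/2*d2)
  have i3 := h3.const_mul (-(s^3)/6*d3)
  have i4 := h4.const_mul (s^4/24*d4)
  have j1 : Integrable (fun ω => G z + -s*d1 * V ω) μ := i0.add i1
  have j2 : Integrable (fun ω => G z + -s*d1 * V ω + s^2/2*d2 * (V ω)^2) μ := j1.add i2
  have j3 : Integrable (fun ω => G z + -s*d1 * V ω + s^2/2*d2 * (V ω)^2
      + -s^3/6*d3 * (V ω)^3) μ := j2.add i3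
  have j4 : Integrable (fun ω => G z + -s*d1 * V ω + s^2/2*d2 * (V ω)^2
      + -s^3/6*d3 * (V ω)^3 + s^4/24*d4 * (V ω)^4) μ := j3.add i4
  rw [integral_add hRint j4, integral_add j3 i4, integral_add j2 i3, integral_add j1 i2,
     integral_add i0 i1,
     integral_const_mul, integral_const_mul, integral_const_mul, integral_const_mul,
     hV1, hV3, integral_const]
  simp [measure_univ]
  ring

/-- Second-order expansion of the contaminated distribution function as δ ↓ 0. -/
theorem stmt_5 {Ω : Type*} [MeasurableSpace Ω] (μ : Measure Ω) [IsProbabilityMeasure μ]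
    (X V : Ω → ℝ) (hX : Measurable X) (hV : Measurable V)
    (hindep : ProbabilityTheory.IndepFun X V μ)
    (hsym : Measure.map (fun ω => -V ω) μ = Measure.map V μ)
    (hV1 : ∫ ω, V ω ∂μ = 0) (hV2 : ∫ ω, (V ω)^2 ∂μ = 1)
    (hV4 : Integrable (fun ω => (V ω)^4) μ)
    (f : ℝ → ℝ) (hf : ContDiff ℝ 4 f)
    (hbd : ∀ n ≤ 4, ∃ C, ∀ x, |iteratedDeriv n f x| ≤ C)
    (hF : ∀ x, (μ {ω | X ω ≤ x}).toReal = ∫ t in Set.Iic x, f t)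
    (z : ℝ) :
    (fun δ : ℝ => (μ {ω | X ω + Real.sqrt δ * V ω ≤ z}).toReal
        - ((μ {ω | X ω ≤ z}).toReal + δ / 2 * deriv f z
            + δ^2 / 24 * iteratedDeriv 3 f z * ∫ ω, (V ω)^4 ∂μ))
      =o[nhdsWithin 0 (Set.Ioi 0)] (fun δ => δ^2) := by
  classical
  have hf4 : ContDiff ℝ (4:ℕ) f := by exact_mod_cast hf
  have hint : ∀ x, IntegrableOn f (Iic x) volume := my_intOn μ X f hF
  obtain ⟨hG5', hGderiv'⟩ := my_G_contDiff f hf4 hint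
  set G : ℝ → ℝ := fun x => (μ {ω | X ω ≤ x}).toReal with hGdef
  have hGeq : G = fun y => ∫ t in Iic y, f t := by rw [hGdef]; exact funext hF
  have hG5 : ContDiff ℝ (5:ℕ) G := by rw [hGeq]; exact hG5'
  have hGderiv : deriv G = f := by rw [hGeq]; exact hGderiv'
  -- iterated derivative facts
  have hGiter : ∀ k : ℕ, iteratedDeriv (k+1) G = iteratedDeriv k f := fun k => by
    rw [iteratedDeriv_succ', hGderiv]
  have hid1 : iteratedDeriv 1 G z = f z := by rw [iteratedDeriv_one, hGderiv]
  have hid2 : iteratedDeriv 2 G z = deriv f z := by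
    rw [show (2:ℕ) = 1 + 1 from rfl, hGiter 1, iteratedDeriv_one]
  have hid3 : iteratedDeriv 3 G z = iteratedDeriv 2 f z := by
    rw [show (3:ℕ) = 2 + 1 from rfl, hGiter 2]
  have hid4 : iteratedDeriv 4 G z = iteratedDeriv 3 f z := by
    rw [show (4:ℕ) = 3 + 1 from rfl, hGiter 3]
  obtain ⟨C3, hC3⟩ := hbd 3 (by norm_num)
  obtain ⟨C4, hC4⟩ := hbd 4 (by norm_num)
  have hC30 : 0 ≤ C3 := le_trans (abs_nonneg _) (hC3 0)
  have hC40 : 0 ≤ C4 := le_trans (abs_nonneg _) (hC4 0)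
  have hC3G : ∀ x, |iteratedDeriv 4 G x| ≤ C3 := fun x => by
    rw [show (4:ℕ) = 3 + 1 from rfl, hGiter 3]; exact hC3 x
  have hC4G : ∀ x, |iteratedDeriv 5 G x| ≤ C4 := fun x => by
    rw [show (5:ℕ) = 4 + 1 from rfl, hGiter 4]; exact hC4 x
  -- integrability of powers of V
  have habs : ∀ (v : ℝ) (k : ℕ), k ≤ 4 → |v ^ k| ≤ 1 + v^4 := by
    intro v k hk
    have h40 : (0:ℝ) ≤ v^4 := by positivity
    rw [abs_pow]
    rcases le_or_gt (|v|) 1 with h1 | h1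
    · have : |v|^k ≤ 1 := pow_le_one₀ (abs_nonneg v) h1
      linarith
    · have h2 : |v|^k ≤ |v|^4 := pow_le_pow_right₀ h1.le hk
      have h4 : |v|^4 = v^4 := by rw [← abs_pow, abs_of_nonneg h40]
      linarith
  have hVk : ∀ k : ℕ, k ≤ 4 → Integrable (fun ω => (V ω)^k) μ := by
    intro k hk
    refine Integrable.mono' ((integrable_const (1:ℝ)).add hV4)
      ((hV.pow_const k).aestronglyMeasurable)
      (Filter.Eventually.of_forall fun ω => ?_)
    rw [Real.norm_eq_abs]
    exact habs (V ω) k hk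
  have hVint1 : Integrable V μ := by simpa using hVk 1 (by norm_num)
  have hVint2 : Integrable (fun ω => (V ω)^2) μ := hVk 2 (by norm_num)
  have hVint3 : Integrable (fun ω => (V ω)^3) μ := hVk 3 (by norm_num)
  -- third moment vanishes
  have hV3 : ∫ ω, (V ω)^3 ∂μ = 0 := by
    have hm3 : AEStronglyMeasurable (fun x : ℝ => x^3) (Measure.map V μ) :=
      (measurable_id.pow_const 3).aestronglyMeasurable
    have hm3' : AEStronglyMeasurable (fun x : ℝ => x^3) (Measure.map (fun ω => -V ω) μ) :=
      (measurable_id.pow_const 3).aestronglyMeasurable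
    have e1 : ∫ ω, (V ω)^3 ∂μ = ∫ x, x^3 ∂(Measure.map V μ) :=
      (integral_map hV.aemeasurable hm3).symm
    have e3 : ∫ x, x^3 ∂(Measure.map (fun ω => -V ω) μ) = ∫ ω, (-V ω)^3 ∂μ :=
      integral_map hV.neg.aemeasurable hm3'
    have e4 : ∫ ω, (-V ω)^3 ∂μ = - ∫ ω, (V ω)^3 ∂μ := by
      simp_rw [Odd.neg_pow (⟨1, by norm_num⟩ : Odd 3)]
      exact integral_neg _
    rw [e1, ← hsym, e3, e4] at *
    linarith [e1]
  -- the remainder function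
  set R : ℝ → Ω → ℝ := fun δ ω => G (z - Real.sqrt δ * V ω)
      - (G z + (-(Real.sqrt δ * V ω)) * f z + (Real.sqrt δ * V ω)^2/2 * deriv f z
         + (-(Real.sqrt δ * V ω))^3/6 * iteratedDeriv 2 f z
         + (Real.sqrt δ * V ω)^4/24 * iteratedDeriv 3 f z) with hRdef
  set K := C3/6 + C3/24 with hK
  have hK0 : 0 ≤ K := by rw [hK]; linarith
  have hR1 : ∀ δ ω, |R δ ω| ≤ C4 * |Real.sqrt δ * V ω|^5 / 24 := by
    intro δ ω
    have ht := my_taylor4 hG5 hC4G z (-(Real.sqrt δ * V ω))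
    rw [← sub_eq_add_neg] at ht
    have e : G (z - Real.sqrt δ * V ω) - (G z
        + (-(Real.sqrt δ * V ω)) * iteratedDeriv 1 G z
        + (-(Real.sqrt δ * V ω))^2/2 * iteratedDeriv 2 G z
        + (-(Real.sqrt δ * V ω))^3/6 * iteratedDeriv 3 G z
        + (-(Real.sqrt δ * V ω))^4/24 * iteratedDeriv 4 G z) = R δ ω := by
      rw [hid1, hid2, hid3, hid4]
      simp only [hRdef]
      ring
    rw [e, abs_neg] at ht
    exact ht
  have hR2 : ∀ δ ω, |R δ ω| ≤ K * (Real.sqrt δ * V ω)^4 := by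
    intro δ ω
    have ht := my_taylor3 (hG5.of_le (by exact_mod_cast (by norm_num : (4:ℕ) ≤ 5))) hC3G z
      (-(Real.sqrt δ * V ω))
    rw [← sub_eq_add_neg] at ht
    set x := Real.sqrt δ * V ω with hx
    have h4nn : (0:ℝ) ≤ x^4 := by positivity
    have habs4 : |(-x)|^4 = x^4 := by
      rw [abs_neg, ← abs_pow, abs_of_nonneg h4nn]
    rw [habs4] at ht
    have e : R δ ω = (G (z - x) - (G z + (-x) * iteratedDeriv 1 G z
        + (-x)^2/2 * iteratedDeriv 2 G z + (-x)^3/6 * iteratedDeriv 3 G z))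
        - x^4/24 * iteratedDeriv 4 G z := by
      rw [hid1, hid2, hid3, hid4]
      simp only [hRdef, hx]
      ring
    rw [e]
    have hB : |x^4/24 * iteratedDeriv 4 G z| ≤ x^4/24 * C3 := by
      rw [abs_mul, abs_of_nonneg (by positivity : (0:ℝ) ≤ x^4/24)]
      exact mul_le_mul_of_nonneg_left (hC3G z) (by positivity)
    calc |(G (z - x) - (G z + (-x) * iteratedDeriv 1 G z
        + (-x)^2/2 * iteratedDeriv 2 G z + (-x)^3/6 * iteratedDeriv 3 G z))
        - x^4/24 * iteratedDeriv 4 G z|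
        ≤ |G (z - x) - (G z + (-x) * iteratedDeriv 1 G z
          + (-x)^2/2 * iteratedDeriv 2 G z + (-x)^3/6 * iteratedDeriv 3 G z)|
          + |x^4/24 * iteratedDeriv 4 G z| := abs_sub _ _
      _ ≤ C3 * x^4 / 6 + x^4/24 * C3 := add_le_add ht hB
      _ = K * x^4 := by rw [hK]; ring
  have hGm : Measurable G := hG5.continuous.measurable
  have hRmeas : ∀ δ, AEStronglyMeasurable (R δ) μ := by
    intro δ
    refine Measurable.aestronglyMeasurable ?_
    simp only [hRdef]
    fun_prop
  have hRint : ∀ δ, Integrable (R δ) μ := by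
    intro δ
    refine Integrable.mono' (hV4.const_mul (K * Real.sqrt δ ^ 4)) (hRmeas δ)
      (Filter.Eventually.of_forall fun ω => ?_)
    rw [Real.norm_eq_abs]
    calc |R δ ω| ≤ K * (Real.sqrt δ * V ω)^4 := hR2 δ ω
      _ = K * Real.sqrt δ ^ 4 * (V ω)^4 := by ring
  -- key identity for positive δ
  have hkey : ∀ δ : ℝ, 0 < δ → (μ {ω | X ω + Real.sqrt δ * V ω ≤ z}).toReal
      = G z + δ/2 * deriv f z + δ^2/24 * iteratedDeriv 3 f z * (∫ ω, (V ω)^4 ∂μ)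
        + ∫ ω, R δ ω ∂μ := by
    intro δ hδ
    have hs2 : Real.sqrt δ ^ 2 = δ := Real.sq_sqrt hδ.le
    have hs4 : Real.sqrt δ ^ 4 = δ^2 := by
      rw [show (4:ℕ) = 2*2 from rfl, pow_mul, hs2]
    have hrep : (μ {ω | X ω + Real.sqrt δ * V ω ≤ z}).toReal
        = ∫ ω, G (z - Real.sqrt δ * V ω) ∂μ :=
      my_rep μ X V hX hV hindep (Real.sqrt δ) z
    have hkey2 := my_key μ V hVint1 hVint2 hVint3 hV4 hV1 hV3 G z (Real.sqrt δ)
      (f z) (deriv f z) (iteratedDeriv 2 f z) (iteratedDeriv 3 f z) (R δ)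
      (fun ω => by simp only [hRdef]) (hRint δ)
    rw [hrep, hkey2, hV2, hs2, hs4]
    ring
  -- eventual equality with remainder integral
  have heq : (fun δ : ℝ => (μ {ω | X ω + Real.sqrt δ * V ω ≤ z}).toReal
        - ((μ {ω | X ω ≤ z}).toReal + δ / 2 * deriv f z
            + δ^2 / 24 * iteratedDeriv 3 f z * ∫ ω, (V ω)^4 ∂μ))
      =ᶠ[nhdsWithin 0 (Set.Ioi 0)] (fun δ => ∫ ω, R δ ω ∂μ) := by
    filter_upwards [self_mem_nhdsWithin] with δ hδ
    have hz : (μ {ω | X ω ≤ z}).toReal = G z := rfl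
    rw [hkey δ hδ, hz]
    ring
  -- the little-o estimate
  have ho : (fun δ : ℝ => ∫ ω, R δ ω ∂μ) =o[nhdsWithin 0 (Set.Ioi 0)] (fun δ => δ^2) := by
    rw [isLittleO_iff]
    intro ε hε
    have hWmeas : ∀ δ : ℝ, Measurable (fun ω =>
        min (C4/24 * Real.sqrt δ * |V ω|^5) (K * (V ω)^4)) := by
      intro δ
      exact ((hV.abs.pow_const 5).const_mul _).min ((hV.pow_const 4).const_mul K)
    have hWnn : ∀ (δ : ℝ) (ω : Ω), 0 ≤ min (C4/24 * Real.sqrt δ * |V ω|^5) (K * (V ω)^4) := by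
      intro δ ω
      refine le_min (by positivity) (by positivity)
    have htend : Tendsto (fun δ : ℝ => ∫ ω, min (C4/24 * Real.sqrt δ * |V ω|^5)
        (K * (V ω)^4) ∂μ) (nhdsWithin 0 (Set.Ioi 0)) (nhds 0) := by
      have hmeas : ∀ᶠ δ : ℝ in nhdsWithin 0 (Set.Ioi 0), AEStronglyMeasurable
          (fun ω => min (C4/24 * Real.sqrt δ * |V ω|^5) (K * (V ω)^4)) μ :=
        Filter.Eventually.of_forall fun δ => (hWmeas δ).aestronglyMeasurable
      have hbnd : ∀ᶠ δ : ℝ in nhdsWithin 0 (Set.Ioi 0), ∀ᵐ ω ∂μ,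
          ‖min (C4/24 * Real.sqrt δ * |V ω|^5) (K * (V ω)^4)‖ ≤ K * (V ω)^4 := by
        refine Filter.Eventually.of_forall fun δ => Filter.Eventually.of_forall fun ω => ?_
        rw [Real.norm_eq_abs, abs_of_nonneg (hWnn δ ω)]
        exact min_le_right _ _
      have hlim : ∀ᵐ ω ∂μ, Tendsto (fun δ : ℝ => min (C4/24 * Real.sqrt δ * |V ω|^5)
          (K * (V ω)^4)) (nhdsWithin 0 (Set.Ioi 0)) (nhds 0) := by
        refine Filter.Eventually.of_forall fun ω => ?_
        have hup : Tendsto (fun δ : ℝ => C4/24 * Real.sqrt δ * |V ω|^5)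
            (nhdsWithin 0 (Set.Ioi 0)) (nhds 0) := by
          have hsq : Tendsto Real.sqrt (nhdsWithin 0 (Set.Ioi 0)) (nhds 0) := by
            have h := Real.continuous_sqrt.tendsto 0
            rw [Real.sqrt_zero] at h
            exact h.mono_left nhdsWithin_le_nhds
          have := (hsq.const_mul (C4/24)).mul_const (|V ω|^5)
          simpa using this
        exact squeeze_zero (fun δ => hWnn δ ω) (fun δ => min_le_left _ _) hup
      have hDCT := tendsto_integral_filter_of_dominated_convergence
        (bound := fun ω => K * (V ω)^4) hmeas hbnd (hV4.const_mul K) hlim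
      simpa using hDCT
    have hev := htend.eventually_lt_const hε
    filter_upwards [hev, self_mem_nhdsWithin] with δ hWε hδ
    have hδ0 : (0:ℝ) < δ := hδ
    have hs2 : Real.sqrt δ ^ 2 = δ := Real.sq_sqrt hδ0.le
    have hs4 : Real.sqrt δ ^ 4 = δ^2 := by rw [show (4:ℕ) = 2*2 from rfl, pow_mul, hs2]
    have hs5 : Real.sqrt δ ^ 5 = δ^2 * Real.sqrt δ := by
      rw [show (5:ℕ) = 4+1 from rfl, pow_succ, hs4]
    have hWint : Integrable (fun ω => min (C4/24 * Real.sqrt δ * |V ω|^5) (K * (V ω)^4)) μ := by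
      refine Integrable.mono' (hV4.const_mul K) ((hWmeas δ).aestronglyMeasurable)
        (Filter.Eventually.of_forall fun ω => ?_)
      rw [Real.norm_eq_abs, abs_of_nonneg (hWnn δ ω)]
      exact min_le_right _ _
    have hpt : ∀ ω, |R δ ω| ≤ δ^2 * min (C4/24 * Real.sqrt δ * |V ω|^5) (K * (V ω)^4) := by
      intro ω
      have hd2 : (0:ℝ) ≤ δ^2 := sq_nonneg δ
      rw [mul_min_of_nonneg _ _ hd2]
      refine le_min ?_ ?_
      · have h1 := hR1 δ ω
        have habs : |Real.sqrt δ * V ω| = Real.sqrt δ * |V ω| := by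
          rw [abs_mul, abs_of_nonneg (Real.sqrt_nonneg δ)]
        calc |R δ ω| ≤ C4 * |Real.sqrt δ * V ω|^5 / 24 := h1
          _ = C4 * (Real.sqrt δ ^5 * |V ω|^5) / 24 := by rw [habs, mul_pow]
          _ = δ^2 * (C4/24 * Real.sqrt δ * |V ω|^5) := by rw [hs5]; ring
      · have h2 := hR2 δ ω
        calc |R δ ω| ≤ K * (Real.sqrt δ * V ω)^4 := h2
          _ = K * (Real.sqrt δ^4 * (V ω)^4) := by rw [mul_pow]
          _ = δ^2 * (K * (V ω)^4) := by rw [hs4]; ring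
    calc ‖∫ ω, R δ ω ∂μ‖ ≤ ∫ ω, ‖R δ ω‖ ∂μ := norm_integral_le_integral_norm _
      _ ≤ ∫ ω, δ^2 * min (C4/24 * Real.sqrt δ * |V ω|^5) (K * (V ω)^4) ∂μ := by
          refine integral_mono ((hRint δ).norm) (hWint.const_mul (δ^2)) (fun ω => ?_)
          rw [Real.norm_eq_abs]
          exact hpt ω
      _ = δ^2 * ∫ ω, min (C4/24 * Real.sqrt δ * |V ω|^5) (K * (V ω)^4) ∂μ :=
          integral_const_mul _ _
      _ ≤ δ^2 * ε := mul_le_mul_of_nonneg_left hWε.le (sq_nonneg δ)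
      _ = ε * ‖δ^2‖ := by
          rw [Real.norm_eq_abs, abs_of_nonneg (sq_nonneg δ)]; ring
  exact ho.congr' heq.symm EventuallyEq.rfl
end

section
/- For the Huber-type contaminated model F̃_{γ,α} = (1-ε)F_0 + ε F_{γ,α}, where F_{γ,α} agrees with F_0 up to τ_α = F_0^{-1}(α) and has Pareto tail with index γ > 1 above τ_α, the expected shortfall equals CVaR_{γ,α} = (1-ε)·CVaR_{F_0,α} + ε·(γ/(γ-1))·τ_α, where CVaR_{F_0,α} = (1-α)^{-1}∫_α^1 F_0^{-1}(t) dt. -/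
/-!
Above `τ = F₀⁻¹(α)` the contaminated survival function is
`(1 - ε)(1 - F₀ x) + ε(1 - α)(τ/x)^γ ≤ 1 - α`, so `Φ_α` acts linearly on it and the CVaR
integral splits into an `F₀`-part and a Pareto part. The Pareto part is
`∫_τ^∞ (τ/x)^γ dx = τ/(γ - 1)`.
The `F₀`-part is the area of `{(x, t) : τ < x, F₀ x < t < 1}`; slicing it vertically gives
`∫_τ^∞ (1 - F₀)`, slicing it horizontally gives `∫_α^1 (F₀⁻¹ t - τ) dt`.
-/

open MeasureTheory Set Filter

section Quantile

variable {F Q : ℝ → ℝ} {α τ : ℝ}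

theorem strictMonoOn_quantile_s12 (hF : StrictMono F) (hQ : ∀ t ∈ Ioo α 1, F (Q t) = t) :
    StrictMonoOn Q (Ioo α 1) := fun s hs t ht hst =>
  hF.lt_iff_lt.mp (by rwa [hQ s hs, hQ t ht])

def tailRegion (F : ℝ → ℝ) (τ : ℝ) : Set (ℝ × ℝ) :=
  {p | τ < p.1 ∧ F p.1 < p.2 ∧ p.2 < 1}

theorem measurableSet_tailRegion (hF : Measurable F) : MeasurableSet (tailRegion F τ) :=
  (measurable_fst measurableSet_Ioi).inter
    ((measurableSet_lt (hF.comp measurable_fst) measurable_snd).inter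
      (measurable_snd measurableSet_Iio))

theorem volume_tailRegion_eq_lintegral_one_sub (hF : Measurable F) :
    (volume.prod volume) (tailRegion F τ) = ∫⁻ x in Ioi τ, ENNReal.ofReal (1 - F x) := by
  rw [Measure.prod_apply (measurableSet_tailRegion hF), ← lintegral_indicator measurableSet_Ioi]
  congr 1 with x
  by_cases hx : x ∈ Ioi τ
  · have hslice : Prod.mk x ⁻¹' tailRegion F τ = Ioo (F x) 1 := by
      ext t; simp_all [tailRegion]
    rw [hslice, Real.volume_Ioo, indicator_of_mem hx]
  · have hslice : Prod.mk x ⁻¹' tailRegion F τ = ∅ := by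
      ext t; simp_all [tailRegion]
    rw [hslice, indicator_of_notMem hx, measure_empty]

theorem volume_tailRegion_eq_lintegral_quantile (hF : StrictMono F) (hFm : Measurable F)
    (hτ : F τ = α) (hQ : ∀ t ∈ Ioo α 1, F (Q t) = t) :
    (volume.prod volume) (tailRegion F τ) = ∫⁻ t in Ioo α 1, ENNReal.ofReal (Q t - τ) := by
  rw [Measure.prod_apply_symm (measurableSet_tailRegion hFm),
    ← lintegral_indicator measurableSet_Ioo]
  congr 1 with t
  by_cases ht : t ∈ Ioo α 1
  · have hslice : (fun x => (x, t)) ⁻¹' tailRegion F τ = Ioo τ (Q t) := by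
      ext x
      have hlt : F x < t ↔ x < Q t := by rw [← hF.lt_iff_lt (a := x) (b := Q t), hQ t ht]
      simp [tailRegion, hlt, ht.2]
    rw [hslice, Real.volume_Ioo, indicator_of_mem ht]
  · have hslice : (fun x => (x, t)) ⁻¹' tailRegion F τ = ∅ := by
      ext x
      simp only [tailRegion, mem_preimage, mem_ofPred_eq, mem_empty_iff_false, iff_false]
      rintro ⟨hx, hFx, ht1⟩
      exact ht ⟨hτ ▸ (hF hx).trans hFx, ht1⟩
    rw [hslice, indicator_of_notMem ht, measure_empty]

theorem integral_Ioi_one_sub_eq_integral_quantile_sub (hF : StrictMono F) (hFc : Continuous F)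
    (hF1 : ∀ x, F x ≤ 1) (hτ : F τ = α) (hQ : ∀ t ∈ Ioo α 1, F (Q t) = t) :
    ∫ x in Ioi τ, (1 - F x) = ∫ t in Ioo α 1, (Q t - τ) := by
  have hQτ : ∀ t ∈ Ioo α 1, τ < Q t := fun t ht =>
    hF.lt_iff_lt.mp (by rw [hτ, hQ t ht]; exact ht.1)
  have hQm : AEMeasurable Q (volume.restrict (Ioo α 1)) :=
    aemeasurable_restrict_of_monotoneOn measurableSet_Ioo
      (strictMonoOn_quantile_s12 hF hQ).monotoneOn
  rw [integral_eq_lintegral_of_nonneg_ae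
      (ae_of_all _ fun x => sub_nonneg.mpr (hF1 x))
      (continuous_const.sub hFc).aestronglyMeasurable,
    integral_eq_lintegral_of_nonneg_ae
      ((ae_restrict_mem measurableSet_Ioo).mono fun t ht => sub_nonneg.mpr (hQτ t ht).le)
      (hQm.sub_const τ).aestronglyMeasurable,
    ← volume_tailRegion_eq_lintegral_one_sub hFc.measurable,
    volume_tailRegion_eq_lintegral_quantile hF hFc.measurable hτ hQ]

theorem intervalIntegral_quantile_eq (hα : α < 1) (hF : StrictMono F) (hFc : Continuous F)
    (hF1 : ∀ x, F x ≤ 1) (hτ : F τ = α) (hQ : ∀ t ∈ Ioo α 1, F (Q t) = t)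
    (hQi : IntervalIntegrable Q volume α 1) :
    ∫ t in α..1, Q t = (1 - α) * τ + ∫ x in Ioi τ, (1 - F x) := by
  have hQi' : IntegrableOn Q (Ioo α 1) := hQi.1.mono_set Ioo_subset_Ioc_self
  rw [integral_Ioi_one_sub_eq_integral_quantile_sub hF hFc hF1 hτ hQ,
    integral_sub hQi' (integrableOn_const (by simp)), setIntegral_const, measureReal_def,
    Real.volume_Ioo, ENNReal.toReal_ofReal (by linarith), intervalIntegral.integral_of_le hα.le,
    integral_Ioc_eq_integral_Ioo, smul_eq_mul]
  ring

end Quantile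

section Pareto

variable {τ γ : ℝ}

theorem div_rpow_eqOn_Ioi (hτ : 0 < τ) :
    EqOn (fun x : ℝ => τ ^ γ * x ^ (-γ)) (fun x => (τ / x) ^ γ) (Ioi τ) := fun x hx => by
  show τ ^ γ * x ^ (-γ) = (τ / x) ^ γ
  have hx : 0 < x := hτ.trans hx
  rw [Real.div_rpow hτ.le hx.le, Real.rpow_neg hx.le, div_eq_mul_inv]

theorem integrableOn_Ioi_div_rpow (hτ : 0 < τ) (hγ : 1 < γ) :
    IntegrableOn (fun x : ℝ => (τ / x) ^ γ) (Ioi τ) :=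
  IntegrableOn.congr_fun
    ((integrableOn_Ioi_rpow_of_lt (a := -γ) (by linarith) hτ).const_mul _)
    (div_rpow_eqOn_Ioi hτ) measurableSet_Ioi

theorem integral_Ioi_div_rpow (hτ : 0 < τ) (hγ : 1 < γ) :
    ∫ x in Ioi τ, (τ / x) ^ γ = τ / (γ - 1) := by
  rw [← setIntegral_congr_fun measurableSet_Ioi (div_rpow_eqOn_Ioi hτ), integral_const_mul,
    integral_Ioi_rpow_of_lt (by linarith) hτ, show -γ + 1 = -(γ - 1) by ring, neg_div_neg_eq,
    ← mul_div_assoc, ← Real.rpow_add hτ, show γ + -(γ - 1) = 1 by ring, Real.rpow_one]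

end Pareto

theorem min_survival_mixture_pareto_eq {α ε a p : ℝ} (hα : α < 1) (hε : 0 ≤ ε)
    (hε1 : ε ≤ 1) (ha : α ≤ a) (ha1 : a ≤ 1) (hp1 : p ≤ 1) :
    min ((1 - ((1 - ε) * a + ε * (1 - (1 - α) * p))) / (1 - α)) 1
      = (1 - ε) * ((1 - a) / (1 - α)) + ε * p := by
  have h1α : 0 < 1 - α := by linarith
  have hsplit : (1 - ((1 - ε) * a + ε * (1 - (1 - α) * p))) / (1 - α)
      = (1 - ε) * ((1 - a) / (1 - α)) + ε * p := by
    field_simp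
    ring
  have hq : (1 - a) / (1 - α) ≤ 1 := (div_le_one h1α).mpr (by linarith)
  have hq0 : 0 ≤ (1 - a) / (1 - α) := div_nonneg (by linarith) h1α.le
  rw [hsplit, min_eq_left]
  nlinarith

theorem stmt_12_general (α γ ε : ℝ) (hα : α ∈ Set.Ioo (0:ℝ) 1) (hγ : 1 < γ)
    (hε : 0 ≤ ε) (hε1 : ε < 1)
    (F0 Finv : ℝ → ℝ) (hcont : Continuous F0) (hsm : StrictMono F0)
    (htop : Tendsto F0 atTop (nhds 1))
    (hInv : ∀ t ∈ Set.Ioo (0:ℝ) 1, F0 (Finv t) = t)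
    (hτpos : 0 < Finv α)
    (hIntQ : IntervalIntegrable Finv volume α 1)
    (hIntT : IntegrableOn (fun x => 1 - F0 x) (Set.Ioi (Finv α))) :
    Finv α + ∫ x in Set.Ioi (Finv α),
        min ((1 - ((1 - ε) * F0 x
          + ε * (if x ≤ Finv α then F0 x else 1 - (1 - α) * (Finv α / x) ^ γ))) / (1 - α)) 1
      = (1 - ε) * ((1 - α)⁻¹ * ∫ t in α..1, Finv t) + ε * (γ / (γ - 1)) * Finv α := by
  obtain ⟨hα0, hα1⟩ := hα
  set τ := Finv α
  have hτ : F0 τ = α := hInv α ⟨hα0, hα1⟩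
  have hF1 : ∀ x, F0 x ≤ 1 := hsm.monotone.ge_of_tendsto htop
  have hlinear : EqOn (fun x => min ((1 - ((1 - ε) * F0 x
          + ε * (if x ≤ τ then F0 x else 1 - (1 - α) * (τ / x) ^ γ))) / (1 - α)) 1)
      (fun x => (1 - ε) * ((1 - F0 x) / (1 - α)) + ε * (τ / x) ^ γ) (Ioi τ) := fun x hx => by
    have hx0 : 0 < x := hτpos.trans hx
    simp only [if_neg (not_le.mpr (mem_Ioi.mp hx))]
    exact min_survival_mixture_pareto_eq hα1 hε hε1.le (hτ ▸ (hsm hx).le) (hF1 x)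
      (Real.rpow_le_one (by positivity) ((div_le_one hx0).mpr hx.le) (by linarith))
  have hQ : ∀ t ∈ Ioo α 1, F0 (Finv t) = t := fun t ht => hInv t ⟨hα0.trans ht.1, ht.2⟩
  have hquantile := intervalIntegral_quantile_eq hα1 hsm hcont hF1 hτ hQ hIntQ
  rw [setIntegral_congr_fun measurableSet_Ioi hlinear,
    integral_add ((hIntT.div_const _).const_mul _)
      ((integrableOn_Ioi_div_rpow hτpos hγ).const_mul _),
    integral_const_mul, integral_div, integral_const_mul, integral_Ioi_div_rpow hτpos hγ,
    hquantile]
  have h1α : 1 - α ≠ 0 := by linarith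
  have hγ1 : γ - 1 ≠ 0 := by linarith
  field_simp
  ring

/-- Expected shortfall of the Huber-type contaminated model with Pareto tail. -/
theorem stmt_12 (α γ ε : ℝ) (hα : α ∈ Set.Ioo (0:ℝ) 1) (hγ : 1 < γ)
    (hε : 0 ≤ ε) (hε1 : ε < 1)
    (F0 Finv : ℝ → ℝ) (hcont : Continuous F0) (hsm : StrictMono F0)
    (hbot : Tendsto F0 atBot (nhds 0)) (htop : Tendsto F0 atTop (nhds 1))
    (hInv : ∀ t ∈ Set.Ioo (0:ℝ) 1, F0 (Finv t) = t)
    (hτpos : 0 < Finv α)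
    (hIntQ : IntervalIntegrable Finv volume α 1)
    (hIntT : IntegrableOn (fun x => 1 - F0 x) (Set.Ioi (Finv α))) :
    Finv α + ∫ x in Set.Ioi (Finv α),
        min ((1 - ((1 - ε) * F0 x
          + ε * (if x ≤ Finv α then F0 x else 1 - (1 - α) * (Finv α / x) ^ γ))) / (1 - α)) 1
      = (1 - ε) * ((1 - α)⁻¹ * ∫ t in α..1, Finv t) + ε * (γ / (γ - 1)) * Finv α :=
  stmt_12_general α γ ε hα hγ hε hε1 F0 Finv hcont hsm htop hInv hτpos hIntQ hIntT
end
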